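/- Let τ be an imaginary quadratic algebraic integer and V its Voronoi cell of 0. Then V is convex, and all vertices of V have the same absolute value. -/

import Mathlib

/-!
`V` is an intersection of half-planes `{z | 2⟪z, y⟫ ≤ ‖y‖²}`, hence convex. As the lattice `Λ` is
discrete, near a point of `V` only finitely many of these constraints matter, so at an extreme
point `z` the constraints of two `ℝ`-independent `y₁, y₂ ∈ Λ` are tight: `z` is the centre of a
circle through `0, y₁, y₂` with no lattice point inside. Hence the triangle `0, y₁, y₂` contains no
further lattice point, `y₁, y₂` is a basis of `Λ`, and `(y₁, -y₂, y₂ - y₁)` is an obtuse superbase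
whose triangle has circumradius `‖z‖ = abc / (4 · area)`. By Selling's formula the two shortest
vectors of an obtuse superbase realise the successive minima of `Λ`, and the area is half the
covolume, so the side lengths, hence the circumradius, are the same for every extreme point.
-/

open Complex RealInnerProductSpace Filter Topology

attribute [local instance] Complex.finrank_real_complex_fact

local notation "ω" => Complex.orientation.areaForm

theorem one_le_intCast_sq {x : ℤ} (hx : x ≠ 0) : (1 : ℝ) ≤ (x : ℝ) ^ 2 :=
  (one_le_sq_iff_one_le_abs _).2 (by exact_mod_cast Int.one_le_abs hx)

theorem le_mul_sq_add_mul_sq {a b : ℝ} {x y : ℤ} (ha : 0 ≤ a) (hab : a ≤ b)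
    (hxy : x ≠ 0 ∨ y ≠ 0) : a ≤ a * (x : ℝ) ^ 2 + b * (y : ℝ) ^ 2 := by
  rcases hxy with hx | hy
  · nlinarith [one_le_intCast_sq hx, sq_nonneg (y : ℝ)]
  · nlinarith [one_le_intCast_sq hy, sq_nonneg (x : ℝ)]

section InnerProductSpace

variable {E : Type*} [NormedAddCommGroup E] [InnerProductSpace ℝ E]

def voronoiCell (Λ : Set E) : Set E := {z | ∀ y ∈ Λ, ‖z‖ ≤ ‖z - y‖}

theorem norm_le_norm_sub_iff (z y : E) : ‖z‖ ≤ ‖z - y‖ ↔ 2 * ⟪z, y⟫ ≤ ‖y‖ ^ 2 := by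
  rw [← sq_le_sq₀ (norm_nonneg _) (norm_nonneg _), norm_sub_sq_real]
  constructor <;> intro h <;> linarith

theorem norm_sub_eq_norm_iff (z y : E) : ‖z - y‖ = ‖z‖ ↔ 2 * ⟪z, y⟫ = ‖y‖ ^ 2 := by
  rw [← sq_eq_sq₀ (norm_nonneg _) (norm_nonneg _), norm_sub_sq_real]
  constructor <;> intro h <;> linarith

theorem mem_voronoiCell_iff {Λ : Set E} {z : E} :
    z ∈ voronoiCell Λ ↔ ∀ y ∈ Λ, 2 * ⟪z, y⟫ ≤ ‖y‖ ^ 2 := by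
  simp only [voronoiCell, Set.mem_ofPred_eq, norm_le_norm_sub_iff]

theorem convex_voronoiCell (Λ : Set E) : Convex ℝ (voronoiCell Λ) := by
  have : voronoiCell Λ = ⋂ y ∈ Λ, {z | 2 * ⟪z, y⟫ ≤ ‖y‖ ^ 2} := by
    ext z; simp [mem_voronoiCell_iff]
  rw [this]
  refine convex_iInter₂ fun y _ => convex_halfSpace_le ⟨fun a b => ?_, fun c a => ?_⟩ _
  · rw [inner_add_left, mul_add]
  · rw [inner_smul_left, RCLike.conj_to_real, smul_eq_mul]; ring

theorem norm_smul_add_smul_sub_sq (g₁ g₂ : ℝ) (y₁ y₂ z : E) :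
    ‖g₁ • y₁ + g₂ • y₂ - z‖ ^ 2 = g₁ * ‖y₁ - z‖ ^ 2 + g₂ * ‖y₂ - z‖ ^ 2 + (1 - g₁ - g₂) * ‖z‖ ^ 2
      - (g₁ * g₂ * ‖y₁ - y₂‖ ^ 2 + g₁ * (1 - g₁ - g₂) * ‖y₁‖ ^ 2
        + g₂ * (1 - g₁ - g₂) * ‖y₂‖ ^ 2) := by
  simp only [norm_sub_sq_real, norm_add_sq_real, norm_smul, inner_add_left, inner_smul_left,
    inner_smul_right, mul_pow, Real.norm_eq_abs, sq_abs, RCLike.conj_to_real]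
  ring

theorem norm_sq_eq_of_add_add_eq_zero {a b c : E} (h : a + b + c = 0) :
    ‖a‖ ^ 2 = -⟪a, b⟫ - ⟪a, c⟫ := by
  have := congrArg (⟪a, ·⟫) h
  simp only [inner_add_right, real_inner_self_eq_norm_sq, inner_zero_right] at this
  linarith

/-- The disc about `z` through `0, y₁, y₂` has no point of `Λ` in its interior, so a point of `Λ`
in the triangle `0, y₁, y₂` is one of its vertices. -/
theorem eq_zero_of_smul_add_smul_mem_voronoiCell {Λ : Set E} {z y₁ y₂ : E} {g₁ g₂ : ℝ}
    (hz : z ∈ voronoiCell Λ) (h₁ : ‖y₁ - z‖ = ‖z‖) (h₂ : ‖y₂ - z‖ = ‖z‖)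
    (hy₁ : y₁ ≠ 0) (hy₂ : y₂ ≠ 0) (hy₁₂ : y₁ ≠ y₂) (hg₁ : 0 ≤ g₁) (hg₂ : 0 ≤ g₂)
    (hg : g₁ + g₂ ≤ 1) (hW : g₁ • y₁ + g₂ • y₂ ∈ Λ) :
    g₁ * g₂ = 0 ∧ g₁ * (1 - g₁ - g₂) = 0 ∧ g₂ * (1 - g₁ - g₂) = 0 := by
  have hdefect : g₁ * g₂ * ‖y₁ - y₂‖ ^ 2 + g₁ * (1 - g₁ - g₂) * ‖y₁‖ ^ 2
      + g₂ * (1 - g₁ - g₂) * ‖y₂‖ ^ 2 ≤ 0 := by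
    have hdist := hz _ hW
    rw [norm_sub_rev, ← sq_le_sq₀ (norm_nonneg _) (norm_nonneg _),
      norm_smul_add_smul_sub_sq, h₁, h₂] at hdist
    linarith
  have n₁₂ : 0 < ‖y₁ - y₂‖ ^ 2 := by have := sub_ne_zero.2 hy₁₂; positivity
  have n₁ : 0 < ‖y₁‖ ^ 2 := by positivity
  have n₂ : 0 < ‖y₂‖ ^ 2 := by positivity
  have c₁₂ : 0 ≤ g₁ * g₂ := mul_nonneg hg₁ hg₂
  have c₁ : 0 ≤ g₁ * (1 - g₁ - g₂) := mul_nonneg hg₁ (by linarith)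
  have c₂ : 0 ≤ g₂ * (1 - g₁ - g₂) := mul_nonneg hg₂ (by linarith)
  refine ⟨?_, ?_, ?_⟩ <;> nlinarith

theorem notMem_extremePoints_of_eventually_add_smul_mem {S : Set E} {z v : E} (hv : v ≠ 0)
    (h : ∀ᶠ t in 𝓝 (0 : ℝ), z + t • v ∈ S) : z ∉ S.extremePoints ℝ := by
  obtain ⟨ε, hε, hball⟩ := Metric.eventually_nhds_iff.1 h
  have hmem : ∀ s : ℝ, s = ε / 2 ∨ s = -(ε / 2) → z + s • v ∈ S := by
    rintro s (rfl | rfl) <;>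
      exact hball (by rw [Real.dist_0_eq_abs, abs_lt]; constructor <;> linarith)
  intro hz
  have hseg : z ∈ openSegment ℝ (z + (ε / 2) • v) (z + (-(ε / 2)) • v) :=
    ⟨1 / 2, 1 / 2, by norm_num, by norm_num, by norm_num, by module⟩
  have := hz.2 (hmem _ (.inl rfl)) (hmem _ (.inr rfl)) hseg
  exact hv ((smul_eq_zero.1 (add_eq_left.1 this)).resolve_left (by positivity))

theorem eventually_add_smul_mem_voronoiCell [ProperSpace E] (Λ : AddSubgroup E)
    [DiscreteTopology Λ] {z v : E} (hz : z ∈ voronoiCell (Λ : Set E))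
    (hv : ∀ y ∈ Λ, 2 * ⟪z, y⟫ = ‖y‖ ^ 2 → ⟪v, y⟫ = 0) :
    ∀ᶠ t in 𝓝 (0 : ℝ), z + t • v ∈ voronoiCell (Λ : Set E) := by
  set M := 2 * (‖z‖ + ‖v‖)
  have hfin : (Metric.closedBall 0 M ∩ (Λ : Set E)).Finite :=
    Metric.finite_isBounded_inter_isClosed DiscreteTopology.isDiscrete
      Metric.isBounded_closedBall AddSubgroup.isClosed_of_discrete
  -- For `|t| ≤ 1` only the finitely many `y ∈ Λ` with `‖y‖ ≤ M` can violate the constraint; of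
  -- those, the tight ones are orthogonal to `v` and the others hold strictly at `t = 0`.
  have hnear : ∀ᶠ t in 𝓝 (0 : ℝ),
      ∀ y ∈ Metric.closedBall 0 M ∩ (Λ : Set E), 2 * ⟪z + t • v, y⟫ ≤ ‖y‖ ^ 2 := by
    refine hfin.eventually_all.2 fun y ⟨_, hy⟩ => ?_
    rcases (mem_voronoiCell_iff.1 hz y hy).eq_or_lt with hact | hlt
    · refine Eventually.of_forall fun t => ?_
      rw [inner_add_left, inner_smul_left, hv y hy hact]
      simp [hact]
    · have hcont : Tendsto (fun t : ℝ => 2 * ⟪z + t • v, y⟫) (𝓝 0) (𝓝 (2 * ⟪z, y⟫)) :=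
        (by fun_prop : Continuous fun t : ℝ => 2 * ⟪z + t • v, y⟫).tendsto' 0 _ (by simp)
      exact (hcont.eventually_lt_const hlt).mono fun _ => le_of_lt
  filter_upwards [hnear, Metric.closedBall_mem_nhds (0 : ℝ) one_pos] with t hnear ht
  rw [mem_voronoiCell_iff]
  intro y hy
  by_cases hyM : ‖y‖ ≤ M
  · exact hnear y ⟨mem_closedBall_zero_iff.2 hyM, hy⟩
  have ht : ‖t‖ ≤ 1 := mem_closedBall_zero_iff.1 ht
  calc 2 * ⟪z + t • v, y⟫ ≤ 2 * ((‖z‖ + ‖v‖) * ‖y‖) := by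
        gcongr
        refine (real_inner_le_norm _ _).trans (mul_le_mul_of_nonneg_right ?_ (norm_nonneg _))
        calc ‖z + t • v‖ ≤ ‖z‖ + ‖t‖ * ‖v‖ := (norm_add_le _ _).trans (by rw [norm_smul])
          _ ≤ ‖z‖ + ‖v‖ := by gcongr; exact mul_le_of_le_one_left (norm_nonneg _) ht
    _ ≤ ‖y‖ ^ 2 := by nlinarith [norm_nonneg y]

end InnerProductSpace

theorem areaForm_smul_add_areaForm_smul (x y₁ y₂ : ℂ) :
    ω x y₂ • y₁ + ω y₁ x • y₂ = ω y₁ y₂ • x := by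
  apply Complex.ext <;>
    simp only [Complex.areaForm, real_smul, add_re, add_im, mul_re, mul_im, conj_re, conj_im,
      ofReal_re, ofReal_im] <;>
    ring

theorem areaForm_zsmul_add_zsmul (v₁ v₂ : ℂ) (m₁ n₁ m₂ n₂ : ℤ) :
    ω (m₁ • v₁ + n₁ • v₂) (m₂ • v₁ + n₂ • v₂) = (m₁ * n₂ - m₂ * n₁ : ℤ) * ω v₁ v₂ := by
  simp only [Complex.areaForm, zsmul_eq_mul]
  simp only [map_add, map_mul, map_intCast, mul_im, add_im, add_re, mul_re, intCast_re,
    intCast_im, conj_re, conj_im]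
  push_cast
  ring

/-- The circumradius formula `R = abc / (4 · area)` for the triangle `0, y₁, y₂` with circumcentre
`z`. -/
theorem two_mul_abs_areaForm_mul_norm {z y₁ y₂ : ℂ} (h₁ : 2 * ⟪z, y₁⟫ = ‖y₁‖ ^ 2)
    (h₂ : 2 * ⟪z, y₂⟫ = ‖y₂‖ ^ 2) : 2 * |ω y₁ y₂| * ‖z‖ = ‖y₁‖ * ‖y₂‖ * ‖y₁ - y₂‖ := by
  rw [← sq_eq_sq₀ (by positivity) (by positivity), mul_pow, mul_pow, mul_pow, mul_pow, sq_abs]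
  simp only [Complex.areaForm, Complex.inner, Complex.sq_norm, normSq_apply, mul_re, mul_im,
    conj_re, conj_im, sub_re, sub_im] at h₁ h₂ ⊢
  have e₁ : 2 * z.re * (y₁.re * y₂.im - y₁.im * y₂.re) =
      (y₁.re * y₁.re + y₁.im * y₁.im) * y₂.im - (y₂.re * y₂.re + y₂.im * y₂.im) * y₁.im := by
    linear_combination y₂.im * h₁ - y₁.im * h₂
  have e₂ : 2 * z.im * (y₁.re * y₂.im - y₁.im * y₂.re) =
      (y₂.re * y₂.re + y₂.im * y₂.im) * y₁.re - (y₁.re * y₁.re + y₁.im * y₁.im) * y₂.re := by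
    linear_combination y₁.re * h₂ - y₂.re * h₁
  linear_combination (2 * z.re * (y₁.re * y₂.im - y₁.im * y₂.re) +
      ((y₁.re * y₁.re + y₁.im * y₁.im) * y₂.im - (y₂.re * y₂.re + y₂.im * y₂.im) * y₁.im)) * e₁ +
    (2 * z.im * (y₁.re * y₂.im - y₁.im * y₂.re) +
      ((y₂.re * y₂.re + y₂.im * y₂.im) * y₁.re - (y₁.re * y₁.re + y₁.im * y₁.im) * y₂.re)) * e₂

theorem exists_active_areaForm_ne_zero (Λ : AddSubgroup ℂ) [DiscreteTopology Λ] {z : ℂ}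
    (hz : z ∈ (voronoiCell (Λ : Set ℂ)).extremePoints ℝ) :
    ∃ y₁ ∈ Λ, ∃ y₂ ∈ Λ, 2 * ⟪z, y₁⟫ = ‖y₁‖ ^ 2 ∧ 2 * ⟪z, y₂⟫ = ‖y₂‖ ^ 2 ∧ ω y₁ y₂ ≠ 0 := by
  by_contra! h
  obtain ⟨v, hv, hperp⟩ : ∃ v ≠ 0, ∀ y ∈ Λ, 2 * ⟪z, y⟫ = ‖y‖ ^ 2 → ⟪v, y⟫ = 0 := by
    by_cases h₀ : ∃ y₀ ∈ Λ, 2 * ⟪z, y₀⟫ = ‖y₀‖ ^ 2 ∧ y₀ ≠ 0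
    · obtain ⟨y₀, hy₀, hact₀, hne⟩ := h₀
      refine ⟨I * y₀, mul_ne_zero I_ne_zero hne, fun y hy hact => ?_⟩
      rw [← Complex.rightAngleRotation, Orientation.inner_rightAngleRotation_left]
      exact h _ hy₀ _ hy hact₀ hact
    · push Not at h₀
      exact ⟨1, one_ne_zero, fun y hy hact => by rw [h₀ y hy hact, inner_zero_right]⟩
  exact notMem_extremePoints_of_eventually_add_smul_mem hv
    (eventually_add_smul_mem_voronoiCell Λ hz.1 hperp) hz

theorem exists_smul_add_smul_eq_of_areaForm_ne_zero {y₁ y₂ : ℂ} (hω : ω y₁ y₂ ≠ 0) (x : ℂ) :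
    ∃ α β : ℝ, x = α • y₁ + β • y₂ := by
  refine ⟨ω x y₂ / ω y₁ y₂, ω y₁ x / ω y₁ y₂, ?_⟩
  rw [div_eq_inv_mul, div_eq_inv_mul, mul_smul, mul_smul, ← smul_add,
    areaForm_smul_add_areaForm_smul, smul_smul, inv_mul_cancel₀ hω, one_smul]

theorem exists_eq_zsmul_add_zsmul_of_active {Λ : AddSubgroup ℂ} {z y₁ y₂ : ℂ}
    (hz : z ∈ voronoiCell (Λ : Set ℂ)) (hy₁ : y₁ ∈ Λ) (hy₂ : y₂ ∈ Λ)
    (h₁ : 2 * ⟪z, y₁⟫ = ‖y₁‖ ^ 2) (h₂ : 2 * ⟪z, y₂⟫ = ‖y₂‖ ^ 2) (hω : ω y₁ y₂ ≠ 0)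
    {x : ℂ} (hx : x ∈ Λ) : ∃ m n : ℤ, x = m • y₁ + n • y₂ := by
  obtain ⟨α, β, hxαβ⟩ := exists_smul_add_smul_eq_of_areaForm_ne_zero hω x
  have hfloor : x = ⌊α⌋ • y₁ + ⌊β⌋ • y₂ + (Int.fract α • y₁ + Int.fract β • y₂) := by
    rw [hxαβ, ← Int.cast_smul_eq_zsmul ℝ, ← Int.cast_smul_eq_zsmul ℝ, Int.fract, Int.fract]
    module
  set a := Int.fract α
  set b := Int.fract β
  have hW : a • y₁ + b • y₂ ∈ Λ := by
    rw [eq_sub_of_add_eq' hfloor.symm]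
    exact sub_mem hx (add_mem (zsmul_mem hy₁ _) (zsmul_mem hy₂ _))
  have hW' : (1 - a) • y₁ + (1 - b) • y₂ ∈ Λ := by
    convert sub_mem (add_mem hy₁ hy₂) hW using 1
    module
  have hne₁ : y₁ ≠ 0 := by rintro rfl; simp at hω
  have hne₂ : y₂ ≠ 0 := by rintro rfl; simp at hω
  have hne₁₂ : y₁ ≠ y₂ := by rintro rfl; simp at hω
  have hz₁ : ‖y₁ - z‖ = ‖z‖ := by rw [norm_sub_rev, norm_sub_eq_norm_iff, h₁]
  have hz₂ : ‖y₂ - z‖ = ‖z‖ := by rw [norm_sub_rev, norm_sub_eq_norm_iff, h₂]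
  have ha₀ : 0 ≤ a := Int.fract_nonneg α
  have hb₀ : 0 ≤ b := Int.fract_nonneg β
  have ha₁ : a < 1 := Int.fract_lt_one α
  have hb₁ : b < 1 := Int.fract_lt_one β
  suffices a = 0 ∧ b = 0 from
    ⟨⌊α⌋, ⌊β⌋, by rw [hfloor, this.1, this.2, zero_smul, zero_smul, add_zero, add_zero]⟩
  -- One of the lattice points `a • y₁ + b • y₂`, `(1 - a) • y₁ + (1 - b) • y₂` lies in the
  -- triangle `0, y₁, y₂`.
  rcases le_or_gt (a + b) 1 with hsum | hsum
  · obtain ⟨hab, ha, hb⟩ := eq_zero_of_smul_add_smul_mem_voronoiCell hz hz₁ hz₂ hne₁ hne₂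
      hne₁₂ ha₀ hb₀ hsum hW
    rcases mul_eq_zero.1 hab with ha₀ | hb₀
    · exact ⟨ha₀, by rw [ha₀] at hb; nlinarith⟩
    · exact ⟨by rw [hb₀] at ha; nlinarith, hb₀⟩
  · have := (eq_zero_of_smul_add_smul_mem_voronoiCell hz hz₁ hz₂ hne₁ hne₂ hne₁₂
      (by linarith) (by linarith) (by linarith) hW').1
    nlinarith

structure IsObtuseSuperbase (Λ : AddSubgroup ℂ) (v₁ v₂ v₃ : ℂ) : Prop where
  mem₁ : v₁ ∈ Λ
  mem₂ : v₂ ∈ Λ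
  add_add_eq_zero : v₁ + v₂ + v₃ = 0
  exists_zsmul_add_zsmul_eq : ∀ x ∈ Λ, ∃ m n : ℤ, x = m • v₁ + n • v₂
  areaForm_ne_zero : ω v₁ v₂ ≠ 0
  inner₁₂ : ⟪v₁, v₂⟫ ≤ 0
  inner₁₃ : ⟪v₁, v₃⟫ ≤ 0
  inner₂₃ : ⟪v₂, v₃⟫ ≤ 0

namespace IsObtuseSuperbase

variable {Λ : AddSubgroup ℂ} {v₁ v₂ v₃ : ℂ}

theorem eq_neg_add (h : IsObtuseSuperbase Λ v₁ v₂ v₃) : v₃ = -(v₁ + v₂) :=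
  eq_neg_of_add_eq_zero_right h.add_add_eq_zero

theorem swap₁₂ (h : IsObtuseSuperbase Λ v₁ v₂ v₃) : IsObtuseSuperbase Λ v₂ v₁ v₃ where
  mem₁ := h.mem₂
  mem₂ := h.mem₁
  add_add_eq_zero := by rw [add_comm v₂]; exact h.add_add_eq_zero
  exists_zsmul_add_zsmul_eq x hx := by
    obtain ⟨m, n, rfl⟩ := h.exists_zsmul_add_zsmul_eq x hx
    exact ⟨n, m, add_comm _ _⟩
  areaForm_ne_zero := by rw [Orientation.areaForm_swap, neg_ne_zero]; exact h.areaForm_ne_zero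
  inner₁₂ := real_inner_comm v₁ v₂ ▸ h.inner₁₂
  inner₁₃ := h.inner₂₃
  inner₂₃ := h.inner₁₃

theorem swap₂₃ (h : IsObtuseSuperbase Λ v₁ v₂ v₃) : IsObtuseSuperbase Λ v₁ v₃ v₂ where
  mem₁ := h.mem₁
  mem₂ := h.eq_neg_add ▸ neg_mem (add_mem h.mem₁ h.mem₂)
  add_add_eq_zero := by rw [add_right_comm]; exact h.add_add_eq_zero
  exists_zsmul_add_zsmul_eq x hx := by
    obtain ⟨m, n, rfl⟩ := h.exists_zsmul_add_zsmul_eq x hx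
    exact ⟨m - n, -n, by rw [h.eq_neg_add]; module⟩
  areaForm_ne_zero := by
    rw [h.eq_neg_add, map_neg, map_add, Orientation.areaForm_apply_self, zero_add, neg_ne_zero]
    exact h.areaForm_ne_zero
  inner₁₂ := h.inner₁₃
  inner₁₃ := h.inner₁₂
  inner₂₃ := real_inner_comm v₂ v₃ ▸ h.inner₂₃

/-- Selling's formula. -/
theorem norm_sq_zsmul_add_zsmul (h : IsObtuseSuperbase Λ v₁ v₂ v₃) (m n : ℤ) :
    ‖m • v₁ + n • v₂‖ ^ 2 =
      -⟪v₁, v₂⟫ * ((m : ℝ) - n) ^ 2 - ⟪v₁, v₃⟫ * (m : ℝ) ^ 2 - ⟪v₂, v₃⟫ * (n : ℝ) ^ 2 := by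
  rw [h.eq_neg_add]
  simp only [Complex.inner, Complex.sq_norm, normSq_apply, zsmul_eq_mul, add_re, add_im, mul_re,
    mul_im, neg_re, neg_im, conj_re, conj_im, intCast_re, intCast_im]
  ring

theorem norm_sq_eq (h : IsObtuseSuperbase Λ v₁ v₂ v₃) :
    ‖v₁‖ ^ 2 = -⟪v₁, v₂⟫ - ⟪v₁, v₃⟫ ∧ ‖v₂‖ ^ 2 = -⟪v₁, v₂⟫ - ⟪v₂, v₃⟫ ∧
      ‖v₃‖ ^ 2 = -⟪v₁, v₃⟫ - ⟪v₂, v₃⟫ := by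
  refine ⟨norm_sq_eq_of_add_add_eq_zero h.add_add_eq_zero, ?_, ?_⟩
  · rw [norm_sq_eq_of_add_add_eq_zero h.swap₁₂.add_add_eq_zero, real_inner_comm v₁]
  · rw [norm_sq_eq_of_add_add_eq_zero h.swap₂₃.swap₁₂.add_add_eq_zero, real_inner_comm v₁,
      real_inner_comm v₂]

theorem norm_le_norm_zsmul_add_zsmul₂ (h : IsObtuseSuperbase Λ v₁ v₂ v₃) (h₂₃ : ‖v₂‖ ≤ ‖v₃‖)
    (m : ℤ) {n : ℤ} (hn : n ≠ 0) : ‖v₂‖ ≤ ‖m • v₁ + n • v₂‖ := by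
  obtain ⟨-, hv₂, hv₃⟩ := h.norm_sq_eq
  rw [← sq_le_sq₀ (norm_nonneg _) (norm_nonneg _)] at h₂₃ ⊢
  have := le_mul_sq_add_mul_sq (x := m - n) (y := m) (neg_nonneg.2 h.inner₁₂) (b := -⟪v₁, v₃⟫)
    (by linarith) (by omega)
  push_cast at this
  rw [h.norm_sq_zsmul_add_zsmul]
  nlinarith [one_le_intCast_sq hn, h.inner₂₃]

theorem norm_le_norm_zsmul_add_zsmul₁ (h : IsObtuseSuperbase Λ v₁ v₂ v₃) (h₁₂ : ‖v₁‖ ≤ ‖v₂‖)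
    (h₂₃ : ‖v₂‖ ≤ ‖v₃‖) {m n : ℤ} (hmn : m ≠ 0 ∨ n ≠ 0) : ‖v₁‖ ≤ ‖m • v₁ + n • v₂‖ := by
  by_cases hn : n = 0
  · subst hn
    have hm := hmn.resolve_right (not_not.2 rfl)
    rw [← sq_le_sq₀ (norm_nonneg _) (norm_nonneg _), h.norm_sq_zsmul_add_zsmul, h.norm_sq_eq.1]
    push_cast
    nlinarith [one_le_intCast_sq hm, h.inner₁₂, h.inner₁₃]
  · exact h₁₂.trans (h.norm_le_norm_zsmul_add_zsmul₂ h₂₃ m hn)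

variable {w₁ w₂ w₃ : ℂ}

theorem exists_basis_change (hv : IsObtuseSuperbase Λ v₁ v₂ v₃)
    (hw : IsObtuseSuperbase Λ w₁ w₂ w₃) : ∃ m₁ n₁ m₂ n₂ : ℤ, w₁ = m₁ • v₁ + n₁ • v₂ ∧
      w₂ = m₂ • v₁ + n₂ • v₂ ∧ m₁ * n₂ - m₂ * n₁ ≠ 0 := by
  obtain ⟨m₁, n₁, rfl⟩ := hv.exists_zsmul_add_zsmul_eq w₁ hw.mem₁
  obtain ⟨m₂, n₂, rfl⟩ := hv.exists_zsmul_add_zsmul_eq w₂ hw.mem₂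
  have hω := hw.areaForm_ne_zero
  rw [areaForm_zsmul_add_zsmul] at hω
  exact ⟨m₁, n₁, m₂, n₂, rfl, rfl, by exact_mod_cast left_ne_zero_of_mul hω⟩

theorem abs_areaForm_le (hv : IsObtuseSuperbase Λ v₁ v₂ v₃)
    (hw : IsObtuseSuperbase Λ w₁ w₂ w₃) : |ω v₁ v₂| ≤ |ω w₁ w₂| := by
  obtain ⟨m₁, n₁, m₂, n₂, rfl, rfl, hdet⟩ := hv.exists_basis_change hw
  rw [areaForm_zsmul_add_zsmul, abs_mul]
  refine le_mul_of_one_le_left (abs_nonneg _) ?_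
  exact_mod_cast Int.one_le_abs hdet

theorem norm_le_of_sorted (hv : IsObtuseSuperbase Λ v₁ v₂ v₃)
    (hw : IsObtuseSuperbase Λ w₁ w₂ w₃) (hv₁₂ : ‖v₁‖ ≤ ‖v₂‖) (hv₂₃ : ‖v₂‖ ≤ ‖v₃‖)
    (hw₁₂ : ‖w₁‖ ≤ ‖w₂‖) : ‖v₁‖ ≤ ‖w₁‖ ∧ ‖v₂‖ ≤ ‖w₂‖ := by
  obtain ⟨m₁, n₁, m₂, n₂, rfl, rfl, hdet⟩ := hv.exists_basis_change hw
  refine ⟨hv.norm_le_norm_zsmul_add_zsmul₁ hv₁₂ hv₂₃ ?_, ?_⟩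
  · by_contra! h
    simp [h] at hdet
  · by_cases hn₂ : n₂ = 0
    · have hn₁ : n₁ ≠ 0 := by rintro rfl; simp [hn₂] at hdet
      exact (hv.norm_le_norm_zsmul_add_zsmul₂ hv₂₃ m₁ hn₁).trans hw₁₂
    · exact hv.norm_le_norm_zsmul_add_zsmul₂ hv₂₃ m₂ hn₂

theorem abs_areaForm_eq (hv : IsObtuseSuperbase Λ v₁ v₂ v₃)
    (hw : IsObtuseSuperbase Λ w₁ w₂ w₃) : |ω v₁ v₂| = |ω w₁ w₂| :=
  (hv.abs_areaForm_le hw).antisymm (hw.abs_areaForm_le hv)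

theorem norm_sq₃_eq (h : IsObtuseSuperbase Λ v₁ v₂ v₃) :
    ‖v₃‖ ^ 2 = ‖v₁‖ ^ 2 + ‖v₂‖ ^ 2 + 2 * ⟪v₁, v₂⟫ := by
  rw [h.eq_neg_add, norm_neg, norm_add_sq_real]
  ring

theorem norm_mul_norm_mul_norm_eq_of_sorted (hv : IsObtuseSuperbase Λ v₁ v₂ v₃)
    (hw : IsObtuseSuperbase Λ w₁ w₂ w₃) (hv₁₂ : ‖v₁‖ ≤ ‖v₂‖) (hv₂₃ : ‖v₂‖ ≤ ‖v₃‖)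
    (hw₁₂ : ‖w₁‖ ≤ ‖w₂‖) (hw₂₃ : ‖w₂‖ ≤ ‖w₃‖) : ‖v₁‖ * ‖v₂‖ * ‖v₃‖ = ‖w₁‖ * ‖w₂‖ * ‖w₃‖ := by
  obtain ⟨hvw₁, hvw₂⟩ := hv.norm_le_of_sorted hw hv₁₂ hv₂₃ hw₁₂
  obtain ⟨hwv₁, hwv₂⟩ := hw.norm_le_of_sorted hv hw₁₂ hw₂₃ hv₁₂
  have h₁ : ‖v₁‖ = ‖w₁‖ := hvw₁.antisymm hwv₁
  have h₂ : ‖v₂‖ = ‖w₂‖ := hvw₂.antisymm hwv₂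
  -- Lagrange's identity `⟪a, b⟫² + (ω a b)² = ‖a‖²‖b‖²`, and both angles are obtuse.
  have hinner : ⟪v₁, v₂⟫ = ⟪w₁, w₂⟫ := by
    have hv' := Complex.orientation.inner_sq_add_areaForm_sq v₁ v₂
    have hw' := Complex.orientation.inner_sq_add_areaForm_sq w₁ w₂
    rw [← sq_abs (ω v₁ v₂), hv.abs_areaForm_eq hw, h₁, h₂, sq_abs] at hv'
    nlinarith [hv.inner₁₂, hw.inner₁₂]
  have h₃ : ‖v₃‖ = ‖w₃‖ := by
    rw [← sq_eq_sq₀ (norm_nonneg _) (norm_nonneg _), hv.norm_sq₃_eq, hw.norm_sq₃_eq, h₁, h₂, hinner]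
  rw [h₁, h₂, h₃]

theorem exists_sorted (h : IsObtuseSuperbase Λ v₁ v₂ v₃) :
    ∃ u₁ u₂ u₃ : ℂ, IsObtuseSuperbase Λ u₁ u₂ u₃ ∧ ‖u₁‖ ≤ ‖u₂‖ ∧ ‖u₂‖ ≤ ‖u₃‖ ∧
      ‖u₁‖ * ‖u₂‖ * ‖u₃‖ = ‖v₁‖ * ‖v₂‖ * ‖v₃‖ := by
  rcases le_total ‖v₁‖ ‖v₂‖ with h₁₂ | h₂₁ <;> rcases le_total ‖v₂‖ ‖v₃‖ with h₂₃ | h₃₂ <;>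
    rcases le_total ‖v₁‖ ‖v₃‖ with h₁₃ | h₃₁
  all_goals first
    | exact ⟨_, _, _, h, ‹_›, ‹_›, rfl⟩
    | exact ⟨_, _, _, h.swap₁₂, ‹_›, ‹_›, by ring⟩
    | exact ⟨_, _, _, h.swap₂₃, ‹_›, ‹_›, by ring⟩
    | exact ⟨_, _, _, h.swap₁₂.swap₂₃, ‹_›, ‹_›, by ring⟩
    | exact ⟨_, _, _, h.swap₂₃.swap₁₂, ‹_›, ‹_›, by ring⟩
    | exact ⟨_, _, _, h.swap₁₂.swap₂₃.swap₁₂, ‹_›, ‹_›, by ring⟩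

theorem norm_mul_norm_mul_norm_eq (hv : IsObtuseSuperbase Λ v₁ v₂ v₃)
    (hw : IsObtuseSuperbase Λ w₁ w₂ w₃) : ‖v₁‖ * ‖v₂‖ * ‖v₃‖ = ‖w₁‖ * ‖w₂‖ * ‖w₃‖ := by
  obtain ⟨v₁', v₂', v₃', hv', hv₁₂, hv₂₃, hv_eq⟩ := hv.exists_sorted
  obtain ⟨w₁', w₂', w₃', hw', hw₁₂, hw₂₃, hw_eq⟩ := hw.exists_sorted
  rw [← hv_eq, ← hw_eq, hv'.norm_mul_norm_mul_norm_eq_of_sorted hw' hv₁₂ hv₂₃ hw₁₂ hw₂₃]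

end IsObtuseSuperbase

theorem exists_isObtuseSuperbase_of_mem_extremePoints (Λ : AddSubgroup ℂ) [DiscreteTopology Λ]
    {z : ℂ} (hz : z ∈ (voronoiCell (Λ : Set ℂ)).extremePoints ℝ) :
    ∃ v₁ v₂ v₃ : ℂ, IsObtuseSuperbase Λ v₁ v₂ v₃ ∧ 2 * |ω v₁ v₂| * ‖z‖ = ‖v₁‖ * ‖v₂‖ * ‖v₃‖ := by
  obtain ⟨y₁, hy₁, y₂, hy₂, h₁, h₂, hω⟩ := exists_active_areaForm_ne_zero Λ hz
  have hV := mem_voronoiCell_iff.1 hz.1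
  have hadd := hV _ (add_mem hy₁ hy₂)
  have hsub₁ := hV _ (sub_mem hy₁ hy₂)
  have hsub₂ := hV _ (sub_mem hy₂ hy₁)
  rw [inner_add_right, norm_add_sq_real] at hadd
  rw [inner_sub_right, norm_sub_sq_real] at hsub₁ hsub₂
  rw [real_inner_comm y₁ y₂] at hsub₂
  -- The obtuse angles come from the constraints at `y₁ + y₂`, `y₁ - y₂` and `y₂ - y₁`.
  refine ⟨y₁, -y₂, y₂ - y₁, ⟨hy₁, neg_mem hy₂, by abel, fun x hx => ?_, ?_, ?_, ?_, ?_⟩, ?_⟩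
  · obtain ⟨m, n, rfl⟩ := exists_eq_zsmul_add_zsmul_of_active hz.1 hy₁ hy₂ h₁ h₂ hω hx
    exact ⟨m, -n, by rw [neg_zsmul, smul_neg, neg_neg]⟩
  · rwa [map_neg, neg_ne_zero]
  · rw [inner_neg_right]; linarith
  · rw [inner_sub_right, real_inner_self_eq_norm_sq]; linarith
  · rw [inner_neg_left, inner_sub_right, real_inner_self_eq_norm_sq, real_inner_comm]; linarith
  · rw [map_neg, abs_neg, norm_neg, norm_sub_rev, two_mul_abs_areaForm_mul_norm h₁ h₂]

theorem exists_norm_eq_of_mem_extremePoints (Λ : AddSubgroup ℂ) [DiscreteTopology Λ] :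
    ∃ r : ℝ, ∀ z ∈ (voronoiCell (Λ : Set ℂ)).extremePoints ℝ, ‖z‖ = r := by
  rcases ((voronoiCell (Λ : Set ℂ)).extremePoints ℝ).eq_empty_or_nonempty with he | ⟨z₀, hz₀⟩
  · exact ⟨0, by simp [he]⟩
  obtain ⟨v₁, v₂, v₃, hv, hz₀v⟩ := exists_isObtuseSuperbase_of_mem_extremePoints Λ hz₀
  refine ⟨‖z₀‖, fun z hz => ?_⟩
  obtain ⟨w₁, w₂, w₃, hw, hzw⟩ := exists_isObtuseSuperbase_of_mem_extremePoints Λ hz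
  have hpos : 0 < 2 * |ω v₁ v₂| := by have := hv.areaForm_ne_zero; positivity
  refine mul_left_cancel₀ hpos.ne' ?_
  rw [hz₀v, hv.abs_areaForm_eq hw, hzw, hv.norm_mul_norm_mul_norm_eq hw]

theorem im_ne_zero_of_sq_sub_mul_add_eq_zero {τ : ℂ} {p q : ℝ}
    (hτ : τ ^ 2 - p * τ + q = 0) (hdisc : p ^ 2 < 4 * q) : τ.im ≠ 0 := by
  intro h
  have hre := congrArg Complex.re hτ
  simp only [sq, add_re, sub_re, mul_re, h, mul_zero, sub_zero, ofReal_re, ofReal_im,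
    zero_re] at hre
  nlinarith [sq_nonneg (2 * τ.re - p)]

theorem linearIndependent_one_of_im_ne_zero {τ : ℂ} (hτ : τ.im ≠ 0) :
    LinearIndependent ℝ ![1, τ] := by
  refine LinearIndependent.pair_iff.2 fun s t hst => ?_
  have him := congrArg Complex.im hst
  have hre := congrArg Complex.re hst
  simp only [add_im, add_re, real_smul, mul_im, mul_re, ofReal_re, ofReal_im,
    one_re, one_im, zero_im, zero_re] at him hre
  have ht : t = 0 := by simpa [hτ] using him
  subst ht
  simpa using hre

/-- Let `τ` be an imaginary quadratic algebraic integer and `V` its Voronoi cell of `0`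
for the lattice `ℤ[τ]`. Then `V` is convex and all vertices (extreme points) of `V` have
the same absolute value. -/
theorem voronoi_cell_convex_and_vertices_equal_abs (p q : ℤ) (τ : ℂ)
    (hτ : τ ^ 2 - (p : ℂ) * τ + (q : ℂ) = 0) (hdisc : p ^ 2 < 4 * q) :
    Convex ℝ {z : ℂ | ∀ a b : ℤ, ‖z‖ ≤ ‖z - ((a : ℂ) + (b : ℂ) * τ)‖} ∧
    ∃ r : ℝ, ∀ z ∈ Set.extremePoints ℝ
        {z : ℂ | ∀ a b : ℤ, ‖z‖ ≤ ‖z - ((a : ℂ) + (b : ℂ) * τ)‖},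
      ‖z‖ = r := by
  have him : τ.im ≠ 0 :=
    im_ne_zero_of_sq_sub_mul_add_eq_zero (p := p) (q := q) (by exact_mod_cast hτ)
      (by exact_mod_cast hdisc)
  let L : PeriodPair := ⟨1, τ, linearIndependent_one_of_im_ne_zero him⟩
  have hV : {z : ℂ | ∀ a b : ℤ, ‖z‖ ≤ ‖z - ((a : ℂ) + (b : ℂ) * τ)‖} =
      voronoiCell (L.lattice.toAddSubgroup : Set ℂ) := by
    ext z
    simp only [voronoiCell, Set.mem_ofPred_eq, SetLike.mem_coe, Submodule.mem_toAddSubgroup,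
      PeriodPair.mem_lattice, show L.ω₁ = 1 from rfl, show L.ω₂ = τ from rfl, mul_one]
    exact ⟨fun h y ⟨a, b, hy⟩ => hy ▸ h a b, fun h a b => h _ ⟨a, b, rfl⟩⟩
  have : DiscreteTopology L.lattice.toAddSubgroup := inferInstanceAs (DiscreteTopology L.lattice)
  rw [hV]
  exact ⟨convex_voronoiCell _, exists_norm_eq_of_mem_extremePoints _⟩
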